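/- In the max-linear model, the extremal concurrence probability at sites s_1,...,s_k equals the sum of the domination probabilities: p(s_1,...,s_k) = ∑_{ℓ=1}^n p_ℓ(s_1,...,s_k), where p_ℓ = [∑_{m=1}^n max_{j=1..k} φ_m(s_j)/φ_ℓ(s_j)]^{-1}. -/

import Mathlib

/-!
Let `A_ℓ` be the event that `φ_ℓ(s_j) Z_ℓ` is the maximum at every site. The concurrence event is
`⋃ ℓ, A_ℓ`, and `A_ℓ ∩ A_ℓ'` forces a tie `φ_ℓ(s_j) Z_ℓ = φ_ℓ'(s_j) Z_ℓ'`, which is null because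
`Z_ℓ` has no atoms and is independent of `Z_ℓ'`; so the probability is `∑ ℓ, ℙ(A_ℓ)`.
If `φ_ℓ > 0` at all sites, then on `{Z > 0}` the event `A_ℓ` reads `∀ m, c_m Z_m ≤ Z_ℓ` with
`c_m = max_j φ_m(s_j) / φ_ℓ(s_j)` and `c_ℓ = 1`. Conditioning on `Z_ℓ` gives
`ℙ(A_ℓ) = 𝔼[exp(-C / Z_ℓ)]` with `C = ∑_{m ≠ ℓ} c_m`, and since `exp(-1 / Z_ℓ)` is uniform on
`(0, 1]` this is `∫₀¹ u^C du = 1 / (1 + C)`. If `φ_ℓ` vanishes at some site, `A_ℓ` is null and the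
corresponding term is `∞⁻¹ = 0`.
-/

open MeasureTheory ProbabilityTheory Set
open scoped ENNReal

structure IsUnitFrechet {Ω : Type*} [MeasurableSpace Ω] (X : Ω → ℝ) (μ : Measure Ω) : Prop where
  ae_pos : ∀ᵐ ω ∂μ, 0 < X ω
  measure_le : ∀ z : ℝ, 0 < z → μ {ω | X ω ≤ z} = ENNReal.ofReal (Real.exp (-1 / z))

namespace IsUnitFrechet

variable {Ω : Type*} [MeasurableSpace Ω] {μ : Measure Ω} [IsProbabilityMeasure μ] {X : Ω → ℝ}

lemma measure_exp_neg_inv_le (hX : IsUnitFrechet X μ) (u : ℝ) :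
    μ {ω | Real.exp (-1 / X ω) ≤ u} = ENNReal.ofReal (min 1 u) := by
  rcases le_or_gt u 0 with hu0 | hu0
  · have hempty : {ω | Real.exp (-1 / X ω) ≤ u} = ∅ :=
      eq_empty_of_forall_notMem fun ω hω => (Real.exp_pos _).not_ge (hω.trans hu0)
    rw [hempty, measure_empty, ENNReal.ofReal_of_nonpos (min_le_of_right_le hu0)]
  rcases le_or_gt 1 u with hu1 | hu1
  · have hall : ∀ᵐ ω ∂μ, Real.exp (-1 / X ω) ≤ u := by
      filter_upwards [hX.ae_pos] with ω hω
      exact (Real.exp_le_one_iff.mpr (div_nonpos_of_nonpos_of_nonneg (by norm_num) hω.le)).trans hu1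
    rw [measure_congr (Filter.eventuallyEq_univ.mpr hall), measure_univ, min_eq_left hu1,
      ENNReal.ofReal_one]
  · have hlog : Real.log u < 0 := Real.log_neg hu0 hu1
    have hset : {ω | Real.exp (-1 / X ω) ≤ u} =ᵐ[μ] {ω | X ω ≤ -1 / Real.log u} := by
      filter_upwards [hX.ae_pos] with ω hω
      change (Real.exp (-1 / X ω) ≤ u) = (X ω ≤ -1 / Real.log u)
      rw [← Real.le_log_iff_exp_le hu0, div_le_iff₀ hω, le_div_iff_of_neg hlog, eq_iff_iff]
      constructor <;> intro h <;> linarith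
    rw [measure_congr hset, hX.measure_le _ (div_pos_of_neg_of_neg (by norm_num) hlog),
      div_div_eq_mul_div, neg_one_mul, neg_div_neg_eq, div_one, Real.exp_log hu0,
      min_eq_right hu1.le]

lemma map_exp_neg_inv (hX : IsUnitFrechet X μ) (hXm : Measurable X) :
    μ.map (fun ω => Real.exp (-1 / X ω)) = volume.restrict (Ioc 0 1) := by
  have := μ.isFiniteMeasure_map (fun ω => Real.exp (-1 / X ω))
  refine Measure.ext_of_Iic _ _ fun u => ?_
  rw [Measure.map_apply (by fun_prop) measurableSet_Iic, Measure.restrict_apply measurableSet_Iic,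
    inter_comm, Ioc_inter_Iic, Real.volume_Ioc, sub_zero]
  exact hX.measure_exp_neg_inv_le u

lemma nullSingletonClass_map (hX : IsUnitFrechet X μ) (hXm : Measurable X) :
    NullSingletonClass (μ.map X) := by
  refine ⟨fun x => ?_⟩
  have hsub : X ⁻¹' {x} ⊆ (fun ω => Real.exp (-1 / X ω)) ⁻¹' {Real.exp (-1 / x)} := by
    rintro ω rfl
    rfl
  rw [Measure.map_apply hXm (measurableSet_singleton x)]
  refine measure_mono_null hsub ?_
  rw [← Measure.map_apply (by fun_prop) (measurableSet_singleton _), hX.map_exp_neg_inv hXm,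
    measure_singleton]

lemma lintegral_exp_neg_div (hX : IsUnitFrechet X μ) (hXm : Measurable X) {c : ℝ} (hc : 0 ≤ c) :
    ∫⁻ ω, ENNReal.ofReal (Real.exp (-c / X ω)) ∂μ = (ENNReal.ofReal (c + 1))⁻¹ := by
  have hpow (x : ℝ) : Real.exp (-c / x) = Real.exp (-1 / x) ^ c := by
    rw [← Real.exp_mul]; ring_nf
  have hint : IntegrableOn (fun u : ℝ => u ^ c) (Ioc 0 1) :=
    (intervalIntegral.intervalIntegrable_rpow' (by linarith)).1
  have hnonneg : 0 ≤ᵐ[volume.restrict (Ioc 0 1)] fun u : ℝ => u ^ c :=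
    (ae_restrict_iff' measurableSet_Ioc).mpr (ae_of_all _ fun u hu => Real.rpow_nonneg hu.1.le c)
  have hintegral : ∫ u in Ioc 0 1, u ^ c = (c + 1)⁻¹ := by
    rw [← intervalIntegral.integral_of_le zero_le_one, integral_rpow (Or.inl (by linarith)),
      Real.one_rpow, Real.zero_rpow (by linarith), sub_zero, one_div]
  calc ∫⁻ ω, ENNReal.ofReal (Real.exp (-c / X ω)) ∂μ
      = ∫⁻ u, ENNReal.ofReal (u ^ c) ∂μ.map (fun ω => Real.exp (-1 / X ω)) := by
        rw [lintegral_map (by fun_prop) (by fun_prop)]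
        simp_rw [hpow]
    _ = ENNReal.ofReal (∫ u in Ioc 0 1, u ^ c) := by
        rw [hX.map_exp_neg_inv hXm, ofReal_integral_eq_lintegral_ofReal hint hnonneg]
    _ = (ENNReal.ofReal (c + 1))⁻¹ := by
        rw [hintegral, ENNReal.ofReal_inv_of_pos (by linarith)]

lemma measure_mul_le (hX : IsUnitFrechet X μ) {c x : ℝ} (hc : 0 ≤ c) (hx : 0 < x) :
    μ {ω | c * X ω ≤ x} = ENNReal.ofReal (Real.exp (-c / x)) := by
  rcases hc.eq_or_lt with rfl | hc
  · simp [hx.le]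
  · simp_rw [← le_div_iff₀' hc]
    rw [hX.measure_le _ (div_pos hx hc), div_div_eq_mul_div, neg_one_mul]

end IsUnitFrechet

section Independence

variable {Ω α β : Type*} [MeasurableSpace Ω] [MeasurableSpace α] [MeasurableSpace β]
  {μ : Measure Ω} [IsFiniteMeasure μ] {X : Ω → α} {Y : Ω → β}

lemma ProbabilityTheory.IndepFun.measure_preimage_prod (hXY : IndepFun X Y μ) (hX : Measurable X)
    (hY : Measurable Y) {S : Set (α × β)} (hS : MeasurableSet S) :
    μ ((fun ω => (X ω, Y ω)) ⁻¹' S) = ∫⁻ x, μ.map Y (Prod.mk x ⁻¹' S) ∂μ.map X := by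
  rw [← Measure.map_apply (hX.prodMk hY) hS,
    (indepFun_iff_map_prod_eq_prod_map_map hX.aemeasurable hY.aemeasurable).mp hXY,
    Measure.prod_apply hS]

lemma ProbabilityTheory.IndepFun.measure_eq_comp_eq_zero (hXY : IndepFun X Y μ)
    (hX : Measurable X) (hY : Measurable Y) [NullSingletonClass (μ.map Y)] {f : α → β}
    (hf : Measurable f) [MeasurableEq β] : μ {ω | Y ω = f (X ω)} = 0 := by
  have hS : MeasurableSet {p : α × β | p.2 = f p.1} :=
    measurableSet_eq_fun measurable_snd (hf.comp measurable_fst)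
  calc μ {ω | Y ω = f (X ω)} = ∫⁻ x, μ.map Y {f x} ∂μ.map X := hXY.measure_preimage_prod hX hY hS
    _ = 0 := by simp only [measure_singleton, lintegral_zero]

end Independence

section Argmax

variable {Ω ι : Type*} [MeasurableSpace Ω] {μ : Measure Ω} [IsProbabilityMeasure μ]
  {Z : ι → Ω → ℝ}

lemma measure_forall_mem_mul_le (hindep : iIndepFun Z μ) (hZ : ∀ m, IsUnitFrechet (Z m) μ)
    {c : ι → ℝ} (hc : ∀ m, 0 ≤ c m) (s : Finset ι) {x : ℝ} (hx : 0 < x) :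
    μ {ω | ∀ m ∈ s, c m * Z m ω ≤ x} = ENNReal.ofReal (Real.exp (-(∑ m ∈ s, c m) / x)) := by
  have hpre : {ω | ∀ m ∈ s, c m * Z m ω ≤ x} = ⋂ m ∈ s, Z m ⁻¹' {y | c m * y ≤ x} := by
    ext ω
    simp
  rw [hpre, hindep.meas_biInter fun m _ => ⟨_, measurableSet_le (by fun_prop) (by fun_prop), rfl⟩]
  simp only [preimage_ofPred_eq, (hZ _).measure_mul_le (hc _) hx]
  rw [← ENNReal.ofReal_prod_of_nonneg fun _ _ => (Real.exp_pos _).le, ← Real.exp_sum,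
    ← Finset.sum_div, Finset.sum_neg_distrib]

lemma measure_forall_mul_le_of_isUnitFrechet [Fintype ι] (hmeas : ∀ m, Measurable (Z m))
    (hindep : iIndepFun Z μ) (hZ : ∀ m, IsUnitFrechet (Z m) μ) {c : ι → ℝ} (hc : ∀ m, 0 ≤ c m)
    {ℓ : ι} (hcℓ : c ℓ = 1) :
    μ {ω | ∀ m, c m * Z m ω ≤ Z ℓ ω} = (ENNReal.ofReal (∑ m, c m))⁻¹ := by
  classical
  set T : Finset ι := {ℓ}ᶜ
  set C := ∑ m ∈ T, c m
  let V : Ω → T → ℝ := fun ω m => Z m ω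
  have hV : Measurable V := measurable_pi_lambda _ fun m => hmeas m
  have hindepV : IndepFun (Z ℓ) V μ :=
    (hindep.indepFun_finset {ℓ} T disjoint_compl_right hmeas).comp
      (measurable_pi_apply (⟨ℓ, Finset.mem_singleton_self ℓ⟩ : ({ℓ} : Finset ι))) measurable_id
  let S : Set (ℝ × (T → ℝ)) := {p | ∀ m : T, c m * p.2 m ≤ p.1}
  have hS : MeasurableSet S := by
    simp only [S, ofPred_forall]
    exact MeasurableSet.iInter fun m => measurableSet_le (by fun_prop) (by fun_prop)
  have hevent : {ω | ∀ m, c m * Z m ω ≤ Z ℓ ω} = (fun ω => (Z ℓ ω, V ω)) ⁻¹' S := by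
    ext ω
    refine ⟨fun h m => h m, fun h m => ?_⟩
    by_cases hm : m = ℓ
    · subst hm; rw [hcℓ, one_mul]
    · exact h ⟨m, by simpa [T] using hm⟩
  have hslice x (hx : 0 < x) :
      μ.map V (Prod.mk x ⁻¹' S) = ENNReal.ofReal (Real.exp (-C / x)) := by
    rw [Measure.map_apply hV (measurable_prodMk_left hS),
      ← measure_forall_mem_mul_le hindep hZ hc T hx]
    congr 1
    ext ω
    simp [V, S]
  have hsum : ∑ m, c m = C + 1 := by
    rw [← Finset.sum_compl_add_sum {ℓ}, Finset.sum_singleton, hcℓ]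
  rw [hevent, hindepV.measure_preimage_prod (hmeas ℓ) hV hS, hsum,
    ← (hZ ℓ).lintegral_exp_neg_div (hmeas ℓ) (Finset.sum_nonneg fun m _ => hc m),
    ← lintegral_map (f := fun x => ENNReal.ofReal (Real.exp (-C / x))) (by fun_prop) (hmeas ℓ)]
  refine lintegral_congr_ae ?_
  filter_upwards [(ae_map_iff (hmeas ℓ).aemeasurable measurableSet_Ioi).mpr (hZ ℓ).ae_pos]
    with x hx using hslice x hx

end Argmax

lemma ciSup_eq_iff_forall_le {α ι : Type*} [ConditionallyCompleteLattice α] [Finite ι]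
    {f : ι → α} {i : ι} : ⨆ j, f j = f i ↔ ∀ j, f j ≤ f i := by
  have : Nonempty ι := ⟨i⟩
  refine ⟨fun h j => h ▸ le_ciSup (Finite.bddAbove_range f) j, fun h => ?_⟩
  exact le_antisymm (ciSup_le h) (le_ciSup (Finite.bddAbove_range f) i)

section MaxLinear

variable {Ω ι κ : Type*} {φ : ι → κ → ℝ} {Z : ι → Ω → ℝ}

def dominationEvent (φ : ι → κ → ℝ) (Z : ι → Ω → ℝ) (ℓ : ι) : Set Ω :=
  {ω | ∀ j m, φ m j * Z m ω ≤ φ ℓ j * Z ℓ ω}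

lemma setOf_exists_iSup_eq_eq_iUnion_dominationEvent [Finite ι] :
    {ω | ∃ ℓ, ∀ j, (⨆ m, φ m j * Z m ω) = φ ℓ j * Z ℓ ω} = ⋃ ℓ, dominationEvent φ Z ℓ := by
  ext ω
  simp only [mem_iUnion, dominationEvent, mem_ofPred_eq, ciSup_eq_iff_forall_le]

variable [MeasurableSpace Ω] {μ : Measure Ω}

lemma measurableSet_dominationEvent [Countable ι] [Countable κ] (hmeas : ∀ m, Measurable (Z m))
    (ℓ : ι) : MeasurableSet (dominationEvent φ Z ℓ) := by
  simp only [dominationEvent, ofPred_forall]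
  exact MeasurableSet.iInter fun j => MeasurableSet.iInter fun m =>
    measurableSet_le ((hmeas m).const_mul _) ((hmeas ℓ).const_mul _)

lemma measure_dominationEvent_eq_zero (hpos : ∀ m, ∀ᵐ ω ∂μ, 0 < Z m ω) {ℓ m₀ : ι} {j : κ}
    (hℓ : φ ℓ j = 0) (hm₀ : 0 < φ m₀ j) : μ (dominationEvent φ Z ℓ) = 0 := by
  refine measure_mono_null (fun ω hω => ?_) (ae_iff.mp (hpos m₀))
  have := hω j m₀
  rw [hℓ, zero_mul] at this
  exact fun h => (mul_pos hm₀ h).not_ge this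

variable [IsProbabilityMeasure μ]

lemma aedisjoint_dominationEvent (hmeas : ∀ m, Measurable (Z m)) (hindep : iIndepFun Z μ)
    (hZ : ∀ m, IsUnitFrechet (Z m) μ) {j : κ} (hj : ∃ m, 0 < φ m j) {ℓ ℓ' : ι} (hne : ℓ ≠ ℓ') :
    AEDisjoint μ (dominationEvent φ Z ℓ) (dominationEvent φ Z ℓ') := by
  obtain ⟨m₀, hm₀⟩ := hj
  have hpos m := (hZ m).ae_pos
  by_cases hℓ : φ ℓ j = 0
  · exact measure_mono_null inter_subset_left (measure_dominationEvent_eq_zero hpos hℓ hm₀)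
  by_cases hℓ' : φ ℓ' j = 0
  · exact measure_mono_null inter_subset_right (measure_dominationEvent_eq_zero hpos hℓ' hm₀)
  have := (hZ ℓ).nullSingletonClass_map (hmeas ℓ)
  refine measure_mono_null (fun ω hω => ?_) ((hindep.indepFun hne.symm).measure_eq_comp_eq_zero
    (hmeas ℓ') (hmeas ℓ) (measurable_const_mul (φ ℓ' j / φ ℓ j)))
  have htie : φ ℓ j * Z ℓ ω = φ ℓ' j * Z ℓ' ω := le_antisymm (hω.2 j ℓ) (hω.1 j ℓ')
  change Z ℓ ω = φ ℓ' j / φ ℓ j * Z ℓ' ω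
  rw [div_mul_eq_mul_div, eq_div_iff hℓ, mul_comm, htie]

lemma measure_dominationEvent_of_pos [Fintype ι] [Finite κ] [Nonempty κ]
    (hmeas : ∀ m, Measurable (Z m)) (hindep : iIndepFun Z μ) (hZ : ∀ m, IsUnitFrechet (Z m) μ)
    (hφ : ∀ m j, 0 ≤ φ m j) {ℓ : ι} (hℓ : ∀ j, 0 < φ ℓ j) :
    μ (dominationEvent φ Z ℓ)
      = (∑ m, ⨆ j, ENNReal.ofReal (φ m j) / ENNReal.ofReal (φ ℓ j))⁻¹ := by
  choose jmax hjmax using fun m => Finite.exists_max fun j => φ m j / φ ℓ j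
  set c : ι → ℝ := fun m => φ m (jmax m) / φ ℓ (jmax m)
  have hc m : 0 ≤ c m := div_nonneg (hφ _ _) (hℓ _).le
  have hcℓ : c ℓ = 1 := div_self (hℓ _).ne'
  have hsup m : ⨆ j, ENNReal.ofReal (φ m j) / ENNReal.ofReal (φ ℓ j) = ENNReal.ofReal (c m) := by
    simp_rw [← ENNReal.ofReal_div_of_pos (hℓ _)]
    exact le_antisymm (iSup_le fun j => ENNReal.ofReal_le_ofReal (hjmax m j))
      (le_iSup_of_le _ le_rfl)
  have hevent : dominationEvent φ Z ℓ =ᵐ[μ] {ω | ∀ m, c m * Z m ω ≤ Z ℓ ω} := by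
    filter_upwards [ae_all_iff.mpr fun m => (hZ m).ae_pos] with ω hω
    have hratio m j : φ m j * Z m ω ≤ φ ℓ j * Z ℓ ω ↔ φ m j / φ ℓ j * Z m ω ≤ Z ℓ ω := by
      rw [div_mul_eq_mul_div, div_le_iff₀' (hℓ j)]
    change (∀ j m, φ m j * Z m ω ≤ φ ℓ j * Z ℓ ω) = ∀ m, c m * Z m ω ≤ Z ℓ ω
    rw [eq_iff_iff, forall_comm]
    refine forall_congr' fun m => ⟨fun h => (hratio m _).1 (h _), fun h j => (hratio m j).2 ?_⟩
    exact (mul_le_mul_of_nonneg_right (hjmax m j) (hω m).le).trans h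
  rw [measure_congr hevent, measure_forall_mul_le_of_isUnitFrechet hmeas hindep hZ hc hcℓ,
    Finset.sum_congr rfl fun m _ => hsup m, ENNReal.ofReal_sum_of_nonneg fun m _ => hc m]

lemma measure_dominationEvent [Fintype ι] [Finite κ] [Nonempty κ]
    (hmeas : ∀ m, Measurable (Z m)) (hindep : iIndepFun Z μ) (hZ : ∀ m, IsUnitFrechet (Z m) μ)
    (hφ : ∀ m j, 0 ≤ φ m j) (hcover : ∀ j, ∃ m, 0 < φ m j) (ℓ : ι) :
    μ (dominationEvent φ Z ℓ)
      = (∑ m, ⨆ j, ENNReal.ofReal (φ m j) / ENNReal.ofReal (φ ℓ j))⁻¹ := by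
  by_cases hℓ : ∀ j, 0 < φ ℓ j
  · exact measure_dominationEvent_of_pos hmeas hindep hZ hφ hℓ
  obtain ⟨j, hj⟩ := not_forall.mp hℓ
  have hj : φ ℓ j = 0 := le_antisymm (not_lt.mp hj) (hφ ℓ j)
  obtain ⟨m₀, hm₀⟩ := hcover j
  have htop : ENNReal.ofReal (φ m₀ j) / ENNReal.ofReal (φ ℓ j) = ∞ := by
    rw [hj, ENNReal.ofReal_zero, ENNReal.div_zero (ENNReal.ofReal_pos.mpr hm₀).ne']
  rw [measure_dominationEvent_eq_zero (fun m => (hZ m).ae_pos) hj hm₀, eq_comm, ENNReal.inv_eq_zero,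
    ENNReal.sum_eq_top]
  exact ⟨m₀, Finset.mem_univ _, eq_top_mono (le_iSup (fun j' => _) j) htop⟩

end MaxLinear

theorem stmt7_general {Ω : Type*} [MeasureSpace Ω] [IsProbabilityMeasure (ℙ : Measure Ω)]
    (n k : ℕ) (hk : 0 < k)
    (Z : Fin n → Ω → ℝ) (φ : Fin n → Fin k → ℝ)
    (hφ : ∀ m j, 0 ≤ φ m j) (hsum : ∀ j, ∑ m, φ m j = 1)
    (hmeas : ∀ m, Measurable (Z m))
    (hindep : iIndepFun Z ℙ)
    (hpos : ∀ m, ∀ᵐ ω ∂ℙ, 0 < Z m ω)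
    (hF : ∀ m, ∀ z : ℝ, 0 < z → ℙ {ω | Z m ω ≤ z} = ENNReal.ofReal (Real.exp (-1 / z))) :
    ℙ {ω | ∃ ℓ, ∀ j, (⨆ m, φ m j * Z m ω) = φ ℓ j * Z ℓ ω}
      = ∑ ℓ, (∑ m, ⨆ j, ENNReal.ofReal (φ m j) / ENNReal.ofReal (φ ℓ j))⁻¹ := by
  have : Nonempty (Fin k) := ⟨⟨0, hk⟩⟩
  have hZ m : IsUnitFrechet (Z m) ℙ := ⟨hpos m, hF m⟩
  have hcover j : ∃ m, 0 < φ m j := by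
    simpa using Finset.exists_lt_of_sum_lt (s := Finset.univ) (f := fun _ => 0) (by simp [hsum j])
  rw [setOf_exists_iSup_eq_eq_iUnion_dominationEvent,
    measure_iUnion₀
      (fun ℓ ℓ' hne => aedisjoint_dominationEvent hmeas hindep hZ (hcover ⟨0, hk⟩) hne)
      fun ℓ => (measurableSet_dominationEvent hmeas ℓ).nullMeasurableSet, tsum_fintype]
  exact Finset.sum_congr rfl fun ℓ _ => measure_dominationEvent hmeas hindep hZ hφ hcover ℓ

/-- In the max-linear model, the extremal concurrence probability (some single component
dominates at all `k` sites) equals the sum of the domination probabilities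
`p_ℓ = [∑_m max_j φ_m(s_j)/φ_ℓ(s_j)]⁻¹` (division in `ℝ≥0∞`, so `0/0 = 0`,
`a/0 = ∞`, `1/∞ = 0`). -/
theorem stmt7 {Ω : Type*} [MeasureSpace Ω] [IsProbabilityMeasure (ℙ : Measure Ω)]
    (n k : ℕ) (hn : 0 < n) (hk : 0 < k)
    (Z : Fin n → Ω → ℝ) (φ : Fin n → Fin k → ℝ)
    (hφ : ∀ m j, 0 ≤ φ m j) (hsum : ∀ j, ∑ m, φ m j = 1)
    (hmeas : ∀ m, Measurable (Z m))
    (hindep : iIndepFun Z ℙ)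
    (hpos : ∀ m, ∀ᵐ ω ∂ℙ, 0 < Z m ω)
    (hF : ∀ m, ∀ z : ℝ, 0 < z → ℙ {ω | Z m ω ≤ z} = ENNReal.ofReal (Real.exp (-1 / z))) :
    ℙ {ω | ∃ ℓ, ∀ j, (⨆ m, φ m j * Z m ω) = φ ℓ j * Z ℓ ω}
      = ∑ ℓ, (∑ m, ⨆ j, ENNReal.ofReal (φ m j) / ENNReal.ofReal (φ ℓ j))⁻¹ :=
  stmt7_general n k hk Z φ hφ hsum hmeas hindep hpos hF
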